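/- In the graph G*_{r_1} obtained from an outerplanar graph H (drawn with its vertices split between two boundary arcs) by adding a hub vertex h, two boundary vertices b_1, b_2, wheel edges from h to the 6-cycle C = (v_1, b_2, v_3, u_3, b_1, u_1), and edges from b_1 (resp. b_2) to all vertices on the first (resp. second) arc, the graph G*_{r_1} is planar. -/

import Mathlib

open SimpleGraph

/-- `b` lies strictly between `a` and `c`. -/
def StrictBtw (a b c : ℕ) : Prop := min a c < b ∧ b < max a c

/-- With vertices placed on a circle according to `f` (cutting the circle open to a line),
two chords cross iff their endpoints interleave: exactly one of `x, y` lies between `u, v`. -/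
def ChordsCross {V : Type} (f : V → ℕ) (u v x y : V) : Prop :=
  Xor' (StrictBtw (f u) (f x) (f v)) (StrictBtw (f u) (f y) (f v))

def EdgesCross {V : Type} (f : V → ℕ) (e e' : Sym2 V) : Prop :=
  ∃ u v x y : V, e = s(u, v) ∧ e' = s(x, y) ∧
    u ≠ x ∧ u ≠ y ∧ v ≠ x ∧ v ≠ y ∧ ChordsCross f u v x y

/-- A crossing-free drawing of `G` in the plane: vertices are distinct points, edges are
arcs (paths) between their endpoints, arcs are injective, avoid other vertices, and two
arcs of distinct edges meet only at shared endpoints. -/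
structure PlaneEmbedding {V : Type} (G : SimpleGraph V) where
  pos : V → ℝ × ℝ
  pos_inj : Function.Injective pos
  arc : ∀ ⦃u v : V⦄, G.Adj u v → Path (pos u) (pos v)
  arc_symm : ∀ ⦃u v : V⦄ (h : G.Adj u v), arc h.symm = (arc h).symm
  arc_inj : ∀ ⦃u v : V⦄ (h : G.Adj u v), Function.Injective (arc h)
  arc_avoid : ∀ ⦃u v : V⦄ (h : G.Adj u v) (w : V),
    pos w ∈ Set.range (arc h) → w = u ∨ w = v
  arcs_meet : ∀ ⦃u v x y : V⦄ (h : G.Adj u v) (h' : G.Adj x y),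
    s(u, v) ≠ s(x, y) → ∀ p : ℝ × ℝ,
      p ∈ Set.range (arc h) → p ∈ Set.range (arc h') → p = pos u ∨ p = pos v

def IsPlanar {V : Type} (G : SimpleGraph V) : Prop := Nonempty (PlaneEmbedding G)

/-!
The augmented graph has a two-page book embedding. Put the vertices on a line in the order
`A, b₁, h, b₂, B`, with `A` and `B` in the order of the outerplanar drawing of `H`. The edges
of `H`, together with `u₁v₁`, `u₃v₃`, `hu₃` and `hv₃`, go on one page; the edges `hb₁`, `hb₂`,
`hu₁`, `hv₁` and the edges from `b₁` to `A` and from `b₂` to `B` go on the other. No two edges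
on the same page interleave. A two-page book embedding gives a plane drawing: draw each edge as a
parabolic arc below or above the line. Two arcs on the same side meet only at a common endpoint,
because the difference of the two parabolas is an affine function.
-/

open Set Function

section Bump

def bumpHeight (a b z : ℝ) : ℝ := (z - a) * (b - z)

lemma bumpHeight_comm (a b z : ℝ) : bumpHeight b a z = bumpHeight a b z := by
  unfold bumpHeight; ring

lemma bumpHeight_nonneg {a b z : ℝ} (hz : z ∈ uIcc a b) : 0 ≤ bumpHeight a b z := by
  rcases le_total a b with h | h
  · rw [uIcc_of_le h] at hz
    exact mul_nonneg (sub_nonneg.2 hz.1) (sub_nonneg.2 hz.2)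
  · rw [uIcc_of_ge h] at hz
    rw [← bumpHeight_comm]
    exact mul_nonneg (sub_nonneg.2 hz.1) (sub_nonneg.2 hz.2)

lemma bumpHeight_eq_zero_iff {a b z : ℝ} : bumpHeight a b z = 0 ↔ z = a ∨ z = b := by
  simp only [bumpHeight, mul_eq_zero, sub_eq_zero, eq_comm (a := b)]

lemma eq_of_bumpHeight_eq {a b d z : ℝ} (hbd : b ≠ d) (h : bumpHeight a b z = bumpHeight a d z) :
    z = a := by
  have : (z - a) * (b - d) = 0 := by unfold bumpHeight at h; linarith
  simpa [sub_eq_zero, hbd] using this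

/-- The difference of the two heights is affine in `z` and positive at `z = c` and `z = d`. -/
lemma bumpHeight_lt_of_mem_Ioo {a b c d z : ℝ} (hc : c ∈ Ioo (min a b) (max a b))
    (hd : d ∈ Ioo (min a b) (max a b)) (hz : z ∈ uIcc c d) :
    bumpHeight c d z < bumpHeight a b z := by
  wlog hab : a ≤ b generalizing a b
  · rw [bumpHeight_comm b a]
    exact this (by rwa [min_comm, max_comm]) (by rwa [min_comm, max_comm]) (le_of_not_ge hab)
  wlog hcd : c ≤ d generalizing c d
  · rw [bumpHeight_comm d c]; exact this (by rwa [uIcc_comm]) hd hc (le_of_not_ge hcd)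
  rw [min_eq_left hab, max_eq_right hab] at hc hd
  rw [uIcc_of_le hcd] at hz
  obtain ⟨hc1, hc2⟩ := hc; obtain ⟨hd1, hd2⟩ := hd; obtain ⟨hz1, hz2⟩ := hz
  unfold bumpHeight
  nlinarith [mul_pos (sub_pos.2 hc1) (sub_pos.2 hc2), mul_pos (sub_pos.2 hd1) (sub_pos.2 hd2),
    mul_nonneg (sub_nonneg.2 hz1) (sub_nonneg.2 hz2)]

def bump (a b ε : ℝ) : Path ((a, 0) : ℝ × ℝ) (b, 0) where
  toFun t := (Path.segment a b t, ε * bumpHeight a b (Path.segment a b t))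
  continuous_toFun := by
    have := (Path.segment a b).continuous
    unfold bumpHeight; fun_prop
  source' := by simp [bumpHeight]
  target' := by simp [bumpHeight]

lemma mem_range_bump {a b ε : ℝ} {q : ℝ × ℝ} :
    q ∈ range (bump a b ε) ↔ ∃ z ∈ uIcc a b, (z, ε * bumpHeight a b z) = q := by
  rw [← segment_eq_uIcc, ← Path.range_segment, ← mem_image, ← range_comp]; rfl

lemma bump_symm (a b ε : ℝ) : (bump a b ε).symm = bump b a ε := by
  refine Path.ext (funext fun t => ?_)
  simp [bump, Path.segment_apply, AffineMap.lineMap_apply_one_sub, bumpHeight_comm]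

lemma bump_injective {a b : ℝ} (hab : a ≠ b) (ε : ℝ) : Injective (bump a b ε) :=
  fun _ _ h => Path.segment_injective_of_ne hab (congrArg Prod.fst h)

end Bump

section BookEmbedding

variable {W : Type} {p : W → ℕ}

def IsNoncrossing (p : W → ℕ) (S : Set (Sym2 W)) : Prop :=
  ∀ e ∈ S, ∀ e' ∈ S, ¬ EdgesCross p e e'

lemma chordsCross_iff {u v x y : W} : ChordsCross p u v x y ↔
    (StrictBtw (p u) (p x) (p v) ∧ ¬ StrictBtw (p u) (p y) (p v)) ∨
      (StrictBtw (p u) (p y) (p v) ∧ ¬ StrictBtw (p u) (p x) (p v)) :=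
  Iff.rfl

lemma edgesCross_mk_iff {a b c d : W} :
    EdgesCross p s(a, b) s(c, d) ↔ a ≠ c ∧ a ≠ d ∧ b ≠ c ∧ b ≠ d ∧ ChordsCross p a b c d := by
  refine ⟨?_, fun ⟨hac, had, hbc, hbd, h⟩ => ⟨a, b, c, d, rfl, rfl, hac, had, hbc, hbd, h⟩⟩
  rintro ⟨u, v, x, y, huv, hxy, hux, huy, hvx, hvy, h⟩
  simp only [chordsCross_iff, StrictBtw] at *
  rcases Sym2.eq_iff.1 huv with ⟨rfl, rfl⟩ | ⟨rfl, rfl⟩ <;>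
    rcases Sym2.eq_iff.1 hxy with ⟨rfl, rfl⟩ | ⟨rfl, rfl⟩ <;>
    refine ⟨by tauto, by tauto, by tauto, by tauto, by omega⟩

lemma edgesCross_mk_iff_of_injective (hp : Injective p) {a b c d : W} :
    EdgesCross p s(a, b) s(c, d) ↔
      p a ≠ p c ∧ p a ≠ p d ∧ p b ≠ p c ∧ p b ≠ p d ∧ ChordsCross p a b c d := by
  simp only [edgesCross_mk_iff, hp.ne_iff]

lemma EdgesCross.symm (hp : Injective p) {e e' : Sym2 W} (h : EdgesCross p e e') :
    EdgesCross p e' e := by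
  induction e using Sym2.ind
  induction e' using Sym2.ind
  rw [edgesCross_mk_iff_of_injective hp] at h ⊢
  simp only [chordsCross_iff, StrictBtw] at *
  omega

lemma IsNoncrossing.union (hp : Injective p) {S T : Set (Sym2 W)} (hS : IsNoncrossing p S)
    (hT : IsNoncrossing p T) (hST : ∀ e ∈ S, ∀ e' ∈ T, ¬ EdgesCross p e e') :
    IsNoncrossing p (S ∪ T) := by
  rintro e (he | he) e' (he' | he')
  exacts [hS e he e' he', hST e he e' he', fun h => hST e' he' e he (h.symm hp), hT e he e' he']

lemma isNoncrossing_star {V : Type} (w : W) (g : V → W) (A : Set V) :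
    IsNoncrossing p ((fun a => s(w, g a)) '' A) := by
  rintro _ ⟨a, -, rfl⟩ _ ⟨b, -, rfl⟩ h
  exact (edgesCross_mk_iff.1 h).1 rfl

lemma IsNoncrossing.image {V : Type} {f : V → ℕ} {E : Set (Sym2 V)} (hE : IsNoncrossing f E)
    {g : V → W} (hg : Injective g) (hpg : ∀ a b, p (g a) < p (g b) ↔ f a < f b) :
    IsNoncrossing p (Sym2.map g '' E) := by
  rintro _ ⟨e, he, rfl⟩ _ ⟨e', he', rfl⟩ h
  induction e using Sym2.ind
  induction e' using Sym2.ind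
  simp only [Sym2.map_mk, edgesCross_mk_iff, hg.ne_iff, chordsCross_iff, StrictBtw, min_lt_iff,
    lt_max_iff, hpg] at h
  exact hE _ he _ he' (by simpa only [edgesCross_mk_iff, chordsCross_iff, StrictBtw, min_lt_iff,
    lt_max_iff] using h)

lemma nested_or_disjoint_of_not_chordsCross {a b c d : ℕ} (hac : a ≠ c) (had : a ≠ d)
    (hbc : b ≠ c) (hbd : b ≠ d) (h : ¬ Xor (StrictBtw a c b) (StrictBtw a d b)) :
    (StrictBtw a c b ∧ StrictBtw a d b) ∨ (StrictBtw c a d ∧ StrictBtw c b d) ∨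
      max a b < min c d ∨ max c d < min a b := by
  unfold StrictBtw Xor at *
  omega

lemma StrictBtw.mem_Ioo_cast {a b c : ℕ} (h : StrictBtw a b c) :
    (b : ℝ) ∈ Ioo (min (a : ℝ) c) (max (a : ℝ) c) :=
  ⟨by exact_mod_cast h.1, by exact_mod_cast h.2⟩

lemma eq_or_eq_of_bumpHeight_eq (hp : Injective p) {u v x y : W} (hne : s(u, v) ≠ s(x, y))
    (hcr : ¬ EdgesCross p s(u, v) s(x, y)) {z : ℝ} (hz : z ∈ uIcc (p u : ℝ) (p v))
    (hz' : z ∈ uIcc (p x : ℝ) (p y))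
    (h : bumpHeight (p u) (p v) z = bumpHeight (p x) (p y) z) : z = p u ∨ z = p v := by
  have cast_ne : ∀ {a b : W}, a ≠ b → (p a : ℝ) ≠ p b := fun hab => by exact_mod_cast hp.ne hab
  by_cases hux : u = x
  · subst hux
    exact .inl (eq_of_bumpHeight_eq (cast_ne fun hvy => hne (by rw [hvy])) h)
  by_cases huy : u = y
  · subst huy
    rw [bumpHeight_comm (p u) (p x)] at h
    exact .inl (eq_of_bumpHeight_eq (cast_ne fun hvx => hne (by rw [hvx, Sym2.eq_swap])) h)
  by_cases hvx : v = x
  · subst hvx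
    rw [bumpHeight_comm (p v) (p u)] at h
    exact .inr (eq_of_bumpHeight_eq (cast_ne huy) h)
  by_cases hvy : v = y
  · subst hvy
    rw [bumpHeight_comm (p v) (p u), bumpHeight_comm (p v) (p x)] at h
    exact .inr (eq_of_bumpHeight_eq (cast_ne hux) h)
  have hnc : ¬ Xor (StrictBtw (p u) (p x) (p v)) (StrictBtw (p u) (p y) (p v)) :=
    fun hc => hcr (edgesCross_mk_iff.2 ⟨hux, huy, hvx, hvy, hc⟩)
  exfalso
  rcases nested_or_disjoint_of_not_chordsCross (hp.ne hux) (hp.ne huy) (hp.ne hvx) (hp.ne hvy) hnc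
    with ⟨hx, hy⟩ | ⟨hu, hv⟩ | hd | hd
  · exact (bumpHeight_lt_of_mem_Ioo hx.mem_Ioo_cast hy.mem_Ioo_cast hz').ne' h
  · exact (bumpHeight_lt_of_mem_Ioo hu.mem_Ioo_cast hv.mem_Ioo_cast hz).ne h
  · have hd' : max (p u : ℝ) (p v) < min (p x : ℝ) (p y) := by exact_mod_cast hd
    exact (hz.2.trans_lt (hd'.trans_le hz'.1)).false
  · have hd' : max (p x : ℝ) (p y) < min (p u : ℝ) (p v) := by exact_mod_cast hd
    exact (hz'.2.trans_lt (hd'.trans_le hz.1)).false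

theorem isPlanar_of_edgeSet_subset_union {G : SimpleGraph W} (hp : Injective p)
    {S T : Set (Sym2 W)} (hG : G.edgeSet ⊆ S ∪ T) (hS : IsNoncrossing p S)
    (hT : IsNoncrossing p T) : IsPlanar G := by
  classical
  let side : Sym2 W → ℝ := fun e => if e ∈ S then -1 else 1
  have side_ne_zero : ∀ e, side e ≠ 0 := fun e => by dsimp only [side]; split_ifs <;> norm_num
  have cast_inj : Injective fun w => (p w : ℝ) := Nat.cast_injective.comp hp
  refine ⟨{
    pos := fun w => ((p w : ℝ), 0)
    pos_inj := fun a b hab => cast_inj (congrArg Prod.fst hab)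
    arc := fun u v _ => bump (p u) (p v) (side s(u, v))
    arc_symm := fun u v _ => by rw [bump_symm, Sym2.eq_swap]
    arc_inj := fun u v huv => bump_injective (cast_inj.ne huv.ne) _
    arc_avoid := fun u v _ w hw => ?_
    arcs_meet := fun u v x y huv hxy hne q hq hq' => ?_ }⟩
  · obtain ⟨z, -, hzw⟩ := mem_range_bump.1 hw
    obtain ⟨rfl, hzero⟩ := Prod.mk.inj hzw
    rcases bumpHeight_eq_zero_iff.1
      ((mul_eq_zero.1 hzero).resolve_left (side_ne_zero _)) with h | h
    exacts [.inl (cast_inj h), .inr (cast_inj h)]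
  · obtain ⟨z, hz, rfl⟩ := mem_range_bump.1 hq
    obtain ⟨z', hz', hzz'⟩ := mem_range_bump.1 hq'
    obtain ⟨rfl, hheight⟩ := Prod.mk.inj hzz'.symm
    suffices z = p u ∨ z = p v by
      rcases this with rfl | rfl <;> simp [bumpHeight]
    have hnn := bumpHeight_nonneg hz
    have hnn' := bumpHeight_nonneg hz'
    have hT_of_notMem : ∀ {a b : W}, G.Adj a b → s(a, b) ∉ S → s(a, b) ∈ T :=
      fun hab h => (hG (G.mem_edgeSet.2 hab)).resolve_left h
    by_cases huvS : s(u, v) ∈ S <;> by_cases hxyS : s(x, y) ∈ S <;>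
      simp only [side, huvS, hxyS, if_true, if_false, neg_one_mul, one_mul, neg_inj] at hheight
    · exact eq_or_eq_of_bumpHeight_eq hp hne (hS _ huvS _ hxyS) hz hz' hheight
    · exact bumpHeight_eq_zero_iff.1 (by linarith)
    · exact bumpHeight_eq_zero_iff.1 (by linarith)
    · exact eq_or_eq_of_bumpHeight_eq hp hne
        (hT _ (hT_of_notMem huv huvS) _ (hT_of_notMem hxy hxyS)) hz hz' hheight

end BookEmbedding

section Augmentation

open Sum

variable {V : Type} {f : V → ℕ}

/-- The spine order is `A`, `b₁ = inr 1`, `h = inr 0`, `b₂ = inr 2`, `B`: scaling `f` by `4`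
leaves room for the three new vertices right after `u₃`, which sits at `4 * m`. -/
def spinePos (f : V → ℕ) (m : ℕ) : V ⊕ Fin 3 → ℕ
  | inl v => 4 * f v
  | inr 0 => 4 * m + 2
  | inr 1 => 4 * m + 1
  | inr 2 => 4 * m + 3

lemma spinePos_injective (hf : Injective f) (m : ℕ) : Injective (spinePos f m) := by
  rintro (a | i) (b | j) h
  · exact congrArg inl (hf (by simp only [spinePos] at h; omega))
  all_goals (try fin_cases i) <;> (try fin_cases j) <;> simp [spinePos] at h ⊢ <;> omega

def lowerPage (H : SimpleGraph V) (u₁ u₃ v₃ v₁ : V) : Set (Sym2 (V ⊕ Fin 3)) :=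
  Sym2.map inl '' H.edgeSet ∪
    {s(inl u₁, inl v₁), s(inl u₃, inl v₃), s(inr 0, inl u₃), s(inr 0, inl v₃)}

def upperPage (A B : Set V) (u₁ v₁ : V) : Set (Sym2 (V ⊕ Fin 3)) :=
  {s(inr 0, inr 1), s(inr 0, inr 2), s(inr 0, inl u₁), s(inr 0, inl v₁)} ∪
    (fun a => s(inr 1, inl a)) '' A ∪ (fun b => s(inr 2, inl b)) '' B

variable {u₁ u₃ v₃ v₁ : V}

lemma isNoncrossing_lowerPage (hf : Injective f) {H : SimpleGraph V}
    (hH : IsNoncrossing f H.edgeSet)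
    (hbound : ∀ w, f u₁ ≤ f w ∧ f w ≤ f v₁ ∧ (f w ≤ f u₃ ∨ f v₃ ≤ f w)) (hgap : f u₃ < f v₃) :
    IsNoncrossing (spinePos f (f u₃)) (lowerPage H u₁ u₃ v₃ v₁) := by
  have hP := spinePos_injective hf (f u₃)
  have h₁ := hbound u₁; have h₃ := hbound u₃; have h₃' := hbound v₃; have h₁' := hbound v₁
  refine .union hP (hH.image inl_injective fun a b => by simp [spinePos]) ?_ ?_
  · rintro _ h _ h'
    simp only [mem_insert_iff, mem_singleton_iff] at h h'
    rcases h with rfl | rfl | rfl | rfl <;> rcases h' with rfl | rfl | rfl | rfl <;>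
      rw [edgesCross_mk_iff_of_injective hP, chordsCross_iff] <;>
      simp [StrictBtw, spinePos] <;> omega
  · rintro _ ⟨e, he, rfl⟩ _ h'
    induction e using Sym2.ind with | _ a b => ?_
    have ha := hbound a; have hb := hbound b
    rw [Sym2.map_mk]
    simp only [mem_insert_iff, mem_singleton_iff] at h'
    rcases h' with rfl | rfl | rfl | rfl <;>
      rw [edgesCross_mk_iff_of_injective hP, chordsCross_iff] <;>
      simp [StrictBtw, spinePos] <;> omega

lemma isNoncrossing_upperPage (hf : Injective f) {A B : Set V}
    (hA : ∀ a ∈ A, f u₁ ≤ f a ∧ f a ≤ f u₃) (hB : ∀ b ∈ B, f v₃ ≤ f b ∧ f b ≤ f v₁)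
    (hu : f u₁ ≤ f u₃) (hgap : f u₃ < f v₃) (hv : f v₃ ≤ f v₁) :
    IsNoncrossing (spinePos f (f u₃)) (upperPage A B u₁ v₁) := by
  have hP := spinePos_injective hf (f u₃)
  refine .union hP (.union hP ?_ (isNoncrossing_star _ _ _) ?_) (isNoncrossing_star _ _ _) ?_
  · rintro _ h _ h'
    simp only [mem_insert_iff, mem_singleton_iff] at h h'
    rcases h with rfl | rfl | rfl | rfl <;> rcases h' with rfl | rfl | rfl | rfl <;>
      rw [edgesCross_mk_iff_of_injective hP, chordsCross_iff] <;>
      simp [StrictBtw, spinePos]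
  · rintro _ h _ ⟨a, ha, rfl⟩
    have := hA a ha
    simp only [mem_insert_iff, mem_singleton_iff] at h
    rcases h with rfl | rfl | rfl | rfl <;>
      rw [edgesCross_mk_iff_of_injective hP, chordsCross_iff] <;>
      simp [StrictBtw, spinePos] <;> omega
  · rintro _ (h | ⟨a, ha, rfl⟩) _ ⟨b, hb, rfl⟩ <;> have := hB b hb
    · simp only [mem_insert_iff, mem_singleton_iff] at h
      rcases h with rfl | rfl | rfl | rfl <;>
        rw [edgesCross_mk_iff_of_injective hP, chordsCross_iff] <;>
        simp [StrictBtw, spinePos] <;> omega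
    · have := hA a ha
      rw [edgesCross_mk_iff_of_injective hP, chordsCross_iff]
      simp [StrictBtw, spinePos]
      omega

end Augmentation

theorem augmented_region_graph_planar_general {V : Type}
    (H : SimpleGraph V) (A B : Finset V) (u₁ u₃ v₃ v₁ : V)
    (hcover : ∀ v : V, v ∈ A ∨ v ∈ B)
    (hu₁ : u₁ ∈ A) (hu₃ : u₃ ∈ A) (hv₃ : v₃ ∈ B) (hv₁ : v₁ ∈ B)
    (f : V → ℕ) (hfinj : Function.Injective f)
    (houter : ∀ e ∈ H.edgeSet, ∀ e' ∈ H.edgeSet, ¬ EdgesCross f e e')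
    (hAB : ∀ a ∈ A, ∀ b ∈ B, f a < f b)
    (hA : ∀ a ∈ A, f u₁ ≤ f a ∧ f a ≤ f u₃)
    (hB : ∀ b ∈ B, f v₃ ≤ f b ∧ f b ≤ f v₁) :
    IsPlanar (SimpleGraph.fromEdgeSet (
      (Sym2.map Sum.inl '' H.edgeSet) ∪
      {s((Sum.inr 0 : V ⊕ Fin 3), Sum.inr 1), s((Sum.inr 0 : V ⊕ Fin 3), Sum.inr 2),
        s((Sum.inr 0 : V ⊕ Fin 3), Sum.inl u₁), s((Sum.inr 0 : V ⊕ Fin 3), Sum.inl u₃),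
        s((Sum.inr 0 : V ⊕ Fin 3), Sum.inl v₁), s((Sum.inr 0 : V ⊕ Fin 3), Sum.inl v₃)} ∪
      {s((Sum.inl v₁ : V ⊕ Fin 3), Sum.inr 2), s((Sum.inr 2 : V ⊕ Fin 3), Sum.inl v₃),
        s((Sum.inl v₃ : V ⊕ Fin 3), Sum.inl u₃), s((Sum.inl u₃ : V ⊕ Fin 3), Sum.inr 1),
        s((Sum.inr 1 : V ⊕ Fin 3), Sum.inl u₁), s((Sum.inl u₁ : V ⊕ Fin 3), Sum.inl v₁)} ∪
      ((fun a => s((Sum.inr 1 : V ⊕ Fin 3), Sum.inl a)) '' (A : Set V)) ∪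
      ((fun b => s((Sum.inr 2 : V ⊕ Fin 3), Sum.inl b)) '' (B : Set V)))) := by
  have hbound : ∀ w, f u₁ ≤ f w ∧ f w ≤ f v₁ ∧ (f w ≤ f u₃ ∨ f v₃ ≤ f w) := fun w =>
    (hcover w).elim (fun hw => ⟨(hA w hw).1, (hAB w hw v₁ hv₁).le, .inl (hA w hw).2⟩)
      (fun hw => ⟨(hAB u₁ hu₁ w hw).le, (hB w hw).2, .inr (hB w hw).1⟩)
  have hgap := hAB u₃ hu₃ v₃ hv₃
  refine isPlanar_of_edgeSet_subset_union (spinePos_injective hfinj (f u₃))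
    (S := lowerPage H u₁ u₃ v₃ v₁) (T := upperPage A B u₁ v₁) ?_
    (isNoncrossing_lowerPage hfinj houter hbound hgap)
    (isNoncrossing_upperPage hfinj hA hB (hA u₃ hu₃).1 hgap (hB v₁ hv₁).1)
  rw [edgeSet_fromEdgeSet]
  refine sdiff_subset.trans ?_
  rintro e ((((he | he) | he) | ⟨a, ha, rfl⟩) | ⟨b, hb, rfl⟩)
  · exact .inl (.inl he)
  · simp only [mem_insert_iff, mem_singleton_iff] at he
    rcases he with rfl | rfl | rfl | rfl | rfl | rfl <;> simp [lowerPage, upperPage]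
  · simp only [mem_insert_iff, mem_singleton_iff] at he
    rcases he with rfl | rfl | rfl | rfl | rfl | rfl <;>
      simp [lowerPage, upperPage, Sym2.eq_swap, hu₁, hu₃, hv₃, hv₁]
  · exact .inr (.inl (.inr ⟨a, ha, rfl⟩))
  · exact .inr (.inr ⟨b, hb, rfl⟩)

/-- Augmenting an outerplanar graph `H`, drawn with its vertices split between two
boundary arcs `A` (from `u₁` to `u₃`) and `B` (from `v₃` to `v₁`), by a hub vertex
`h = inr 0`, boundary vertices `b₁ = inr 1`, `b₂ = inr 2`, the wheel on the 6-cycle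
`(v₁, b₂, v₃, u₃, b₁, u₁)` centered at `h`, edges from `b₁` to all vertices of `A`, and
edges from `b₂` to all vertices of `B`, yields a planar graph. -/
theorem augmented_region_graph_planar {V : Type} [Fintype V] [DecidableEq V]
    (H : SimpleGraph V) (A B : Finset V) (u₁ u₃ v₃ v₁ : V)
    (hcover : ∀ v : V, v ∈ A ∨ v ∈ B) (hdisj : Disjoint A B)
    (hu₁ : u₁ ∈ A) (hu₃ : u₃ ∈ A) (hv₃ : v₃ ∈ B) (hv₁ : v₁ ∈ B)
    (f : V → ℕ) (hfinj : Function.Injective f)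
    (houter : ∀ e ∈ H.edgeSet, ∀ e' ∈ H.edgeSet, ¬ EdgesCross f e e')
    (hAB : ∀ a ∈ A, ∀ b ∈ B, f a < f b)
    (hA : ∀ a ∈ A, f u₁ ≤ f a ∧ f a ≤ f u₃)
    (hB : ∀ b ∈ B, f v₃ ≤ f b ∧ f b ≤ f v₁) :
    IsPlanar (SimpleGraph.fromEdgeSet (
      (Sym2.map Sum.inl '' H.edgeSet) ∪
      {s((Sum.inr 0 : V ⊕ Fin 3), Sum.inr 1), s((Sum.inr 0 : V ⊕ Fin 3), Sum.inr 2),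
        s((Sum.inr 0 : V ⊕ Fin 3), Sum.inl u₁), s((Sum.inr 0 : V ⊕ Fin 3), Sum.inl u₃),
        s((Sum.inr 0 : V ⊕ Fin 3), Sum.inl v₁), s((Sum.inr 0 : V ⊕ Fin 3), Sum.inl v₃)} ∪
      {s((Sum.inl v₁ : V ⊕ Fin 3), Sum.inr 2), s((Sum.inr 2 : V ⊕ Fin 3), Sum.inl v₃),
        s((Sum.inl v₃ : V ⊕ Fin 3), Sum.inl u₃), s((Sum.inl u₃ : V ⊕ Fin 3), Sum.inr 1),
        s((Sum.inr 1 : V ⊕ Fin 3), Sum.inl u₁), s((Sum.inl u₁ : V ⊕ Fin 3), Sum.inl v₁)} ∪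
      ((fun a => s((Sum.inr 1 : V ⊕ Fin 3), Sum.inl a)) '' (A : Set V)) ∪
      ((fun b => s((Sum.inr 2 : V ⊕ Fin 3), Sum.inl b)) '' (B : Set V)))) :=
  augmented_region_graph_planar_general H A B u₁ u₃ v₃ v₁ hcover hu₁ hu₃ hv₃ hv₁ f hfinj houter hAB
    hA hB
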